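/- If pν > 1 (equivalently s_h > 2), then for every x ∈ X the integral ∫_0^∞ p(t,x,x) dt converges and equals p(ν−1)/(pν−1), and lim_{λ→0+} R_λ(x,x) = p(ν−1)/(pν−1); if pν ≤ 1 (equivalently s_h ≤ 2), then R_λ(x,x) → +∞ as λ → 0+. In other words, the hierarchical random walk is transient for s_h > 2 and recurrent for s_h ≤ 2. -/

import Mathlib

noncomputable section
open scoped ENNReal
open MeasureTheory Filter

def HX (ν : ℕ) : Type := {x : ℕ → Fin ν // ∃ N, ∀ n, N ≤ n → (x n : ℕ) = 0}
instance (ν : ℕ) : DecidableEq (HX ν) := Classical.decEq _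
abbrev Hl2 (ν : ℕ) : Type := lp (fun _ : HX ν => ℝ) 2
def cube (ν : ℕ) (r : ℕ) (x : HX ν) : Set (HX ν) := {y | ∀ n, r ≤ n → y.1 n = x.1 n}
def hdelta (ν : ℕ) (x : HX ν) : Hl2 ν := lp.single 2 x 1
def cubeSum (ν r : ℕ) (x : HX ν) (ψ : Hl2 ν) : ℝ := ∑' y : cube ν r x, ψ y
def IsHierLap (ν : ℕ) (p : ℝ) (Δ : Hl2 ν →L[ℝ] Hl2 ν) : Prop :=
  ∀ ψ x, Δ ψ x = ∑' r : ℕ,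
    (1 - p) * p ^ r * (((ν : ℝ) ^ (r + 1))⁻¹ * cubeSum ν (r + 1) x ψ - ψ x)
/-- Spectral dimension `s_h = 2 ln ν / ln(1/p)`. -/
def sh (ν : ℕ) (p : ℝ) : ℝ := 2 * Real.log ν / Real.log (1 / p)
/-- Heat kernel `p(t,x,y) = ⟨exp(tΔ_h) δ_y, δ_x⟩`. -/
def heatK (ν : ℕ) (Δ : Hl2 ν →L[ℝ] Hl2 ν) (t : ℝ) (x y : HX ν) : ℝ :=
  @inner ℝ _ _ (NormedSpace.exp (t • Δ) (hdelta ν y)) (hdelta ν x)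
/-- Resolvent kernel `R_λ(x,y) = ⟨(λI − Δ_h)⁻¹ δ_y, δ_x⟩`. -/
def resolvK (ν : ℕ) (Δ : Hl2 ν →L[ℝ] Hl2 ν) (lam : ℝ) (x y : HX ν) : ℝ :=
  @inner ℝ _ _ (Ring.inverse (lam • (1 : Hl2 ν →L[ℝ] Hl2 ν) - Δ) (hdelta ν y)) (hdelta ν x)

/-!
The functions `haar r x = ν^{-r} 1_{Q_r(x)} - ν^{-r-1} 1_{Q_{r+1}(x)}` are eigenvectors of `Δ_h`
with eigenvalue `-p^r`: averaging over cubes of rank `t` fixes them for `t ≤ r` and kills them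
for `t > r`, so only the terms `r' ≥ r` of the series defining `Δ_h` contribute, and they add up
to `-p^r`. Since `δ_x` is the telescoping sum of the `haar r x`, we get
`p(t,x,x) = ∑ c_r e^{-p^r t}` and `R_λ(x,x) = ∑ c_r / (λ + p^r)` with
`c_r = (1 - 1/ν) ν^{-r}`. The integral in `t` and the limit `λ → 0+` are then both
`∑ c_r p^{-r} = (1 - 1/ν) ∑ (pν)^{-r}`, which is finite exactly when `pν > 1`. The resolvent
exists for `λ > 0` because `1 + Δ_h` is a convex combination of cube averages, which are
`ℓ²`-contractions by Jensen's inequality on each cube.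
-/

open Set Topology

theorem lp.norm_sq_eq_tsum_sq {α : Type*} (f : lp (fun _ : α => ℝ) 2) :
    ‖f‖ ^ 2 = ∑' i, f i ^ 2 := by
  rw [← real_inner_self_eq_norm_sq, lp.inner_eq_tsum]
  simp [sq]

theorem memℓp_two_iff_summable_sq {α : Type*} {f : α → ℝ} :
    Memℓp f 2 ↔ Summable fun i => f i ^ 2 := by
  rw [memℓp_gen_iff (by norm_num)]
  norm_num

theorem hasSum_ite_lt_geometric {p : ℝ} (hp0 : 0 ≤ p) (hp1 : p < 1) (r : ℕ) :
    HasSum (fun m => if m < r then 0 else (1 - p) * p ^ m) (p ^ r) := by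
  have h := (hasSum_geometric_of_lt_one hp0 hp1).mul_left (p ^ r * (1 - p))
  rw [mul_assoc, mul_inv_cancel₀ (sub_ne_zero.2 hp1.ne'), mul_one] at h
  rw [← hasSum_nat_add_iff' r, Finset.sum_eq_zero fun i hi => if_pos (Finset.mem_range.1 hi),
    sub_zero]
  refine h.congr_fun fun n => ?_
  rw [if_neg (by omega), pow_add]
  ring

theorem hasSum_one_sub_mul_geometric {p : ℝ} (hp0 : 0 ≤ p) (hp1 : p < 1) :
    HasSum (fun m => (1 - p) * p ^ m) 1 := by
  simpa using hasSum_ite_lt_geometric hp0 hp1 0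

theorem sqrt_inv_lt_one_of_one_lt {a : ℝ} (ha : 1 < a) : √a⁻¹ < 1 :=
  (Real.sqrt_lt' one_pos).2 (by simpa using inv_lt_one_of_one_lt₀ ha)

theorem summable_sq_fiberAvg_and_tsum_le {ι β : Type*} [Fintype ι] {f : ι × β → ℝ}
    (hf : Summable fun w => f w ^ 2) :
    Summable (fun w : ι × β => ((∑ i, f (i, w.2)) / Fintype.card ι) ^ 2) ∧
      ∑' w : ι × β, ((∑ i, f (i, w.2)) / Fintype.card ι) ^ 2 ≤ ∑' w, f w ^ 2 := by
  set g : β → ℝ := fun z => ∑ i, f (i, z) ^ 2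
  have hg : Summable g := summable_sum fun i _ => hf.prod_factor i
  have hB : Summable fun w : ι × β => g w.2 / Fintype.card ι :=
    (summable_prod_of_nonneg fun w => by positivity).2
      ⟨fun _ => hg.div_const _, Summable.of_finite⟩
  have hle : ∀ w : ι × β,
      ((∑ i, f (i, w.2)) / Fintype.card ι) ^ 2 ≤ g w.2 / Fintype.card ι :=
    fun w => sum_div_card_sq_le_sum_sq_div_card
  have hB_tsum : ∑' w : ι × β, g w.2 / Fintype.card ι = ∑' w, f w ^ 2 := by
    rcases isEmpty_or_nonempty ι with _ | _
    · simp
    rw [hB.tsum_prod' hB.prod_factor, hf.tsum_prod' hf.prod_factor, tsum_fintype, tsum_fintype,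
      ← Summable.tsum_finsetSum fun i _ => hf.prod_factor i]
    simp only [tsum_div_const, Finset.sum_const, Finset.card_univ, nsmul_eq_mul]
    exact mul_div_cancel₀ _ (by positivity)
  have hA := hB.of_nonneg_of_le (fun w => sq_nonneg _) hle
  exact ⟨hA, (Summable.tsum_le_tsum hle hA hB).trans hB_tsum.le⟩

section SeriesOfFunctions

variable {α : Type*} [MeasurableSpace α] {μ : Measure α}

theorem integrable_tsum_of_nonneg {F : ℕ → α → ℝ} (hF : ∀ i, Integrable (F i) μ)
    (hF0 : ∀ i a, 0 ≤ F i a) (hsum : ∀ᵐ a ∂μ, Summable fun i => F i a)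
    (hint : Summable fun i => ∫ a, F i a ∂μ) :
    Integrable (fun a => ∑' i, F i a) μ := by
  refine ⟨aestronglyMeasurable_of_tendsto_ae atTop
    (fun n => Finset.aestronglyMeasurable_fun_sum _ fun i _ => (hF i).1)
    (hsum.mono fun a ha => ha.hasSum.tendsto_sum_nat), ?_⟩
  rw [hasFiniteIntegral_iff_ofReal (ae_of_all _ fun a => tsum_nonneg (hF0 · a))]
  calc ∫⁻ a, ENNReal.ofReal (∑' i, F i a) ∂μ
      = ∫⁻ a, ∑' i, ENNReal.ofReal (F i a) ∂μ :=
        lintegral_congr_ae (hsum.mono fun a ha => ENNReal.ofReal_tsum_of_nonneg (hF0 · a) ha)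
    _ = ∑' i, ENNReal.ofReal (∫ a, F i a ∂μ) := by
        rw [lintegral_tsum fun i => (hF i).1.aemeasurable.ennreal_ofReal]
        congr 1 with i
        exact (ofReal_integral_eq_lintegral_ofReal (hF i) (ae_of_all _ (hF0 i))).symm
    _ = ENNReal.ofReal (∑' i, ∫ a, F i a ∂μ) :=
        (ENNReal.ofReal_tsum_of_nonneg (fun i => integral_nonneg (hF0 i)) hint).symm
    _ < ⊤ := ENNReal.ofReal_lt_top

end SeriesOfFunctions

section ExponentialMixtures

theorem tendsto_div_add_nhdsGT_zero (c : ℝ) {q : ℝ} (hq : q ≠ 0) :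
    Tendsto (fun s => c / (s + q)) (𝓝[>] 0) (𝓝 (c / q)) := by
  have : Tendsto (fun s : ℝ => c / (s + q)) (𝓝 0) (𝓝 (c / (0 + q))) :=
    tendsto_const_nhds.div (tendsto_id.add_const _) (by simpa using hq)
  simpa using this.mono_left nhdsWithin_le_nhds

variable {c q : ℕ → ℝ}

theorem integrableOn_tsum_mul_exp_and_integral_eq (hc : ∀ r, 0 ≤ c r) (hq : ∀ r, 0 < q r)
    (hc_sum : Summable c) (hcq : Summable fun r => c r / q r) :
    IntegrableOn (fun t => ∑' r, c r * Real.exp (-q r * t)) (Ioi 0) ∧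
      ∫ t in Ioi 0, ∑' r, c r * Real.exp (-q r * t) = ∑' r, c r / q r := by
  have hF : ∀ r, IntegrableOn (fun t => c r * Real.exp (-q r * t)) (Ioi 0) := fun r =>
    (integrableOn_exp_mul_Ioi (neg_lt_zero.2 (hq r)) 0).const_mul (c r)
  have hF0 : ∀ r t, 0 ≤ c r * Real.exp (-q r * t) := fun r t =>
    mul_nonneg (hc r) (Real.exp_pos _).le
  have hval : ∀ r, ∫ t in Ioi 0, c r * Real.exp (-q r * t) = c r / q r := fun r => by
    rw [integral_const_mul, integral_exp_mul_Ioi (neg_lt_zero.2 (hq r)), mul_zero, Real.exp_zero,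
      div_neg, neg_div, neg_neg, mul_one_div]
  have hsum : ∀ᵐ t ∂(volume.restrict (Ioi (0 : ℝ))),
      Summable fun r => c r * Real.exp (-q r * t) := by
    filter_upwards [ae_restrict_mem measurableSet_Ioi] with t (ht : 0 < t)
    refine hc_sum.of_nonneg_of_le (hF0 · t) fun r => mul_le_of_le_one_right (hc r) ?_
    exact Real.exp_le_one_iff.2 (mul_nonpos_of_nonpos_of_nonneg (neg_nonpos.2 (hq r).le) ht.le)
  refine ⟨integrable_tsum_of_nonneg hF hF0 hsum (by simpa only [hval] using hcq), ?_⟩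
  rw [← integral_tsum_of_summable_integral_norm hF, tsum_congr hval]
  simpa only [Real.norm_of_nonneg (hF0 _ _), hval] using hcq

theorem tendsto_tsum_div_add_nhdsGT (hc : ∀ r, 0 ≤ c r) (hq : ∀ r, 0 < q r)
    (hcq : Summable fun r => c r / q r) :
    Tendsto (fun s => ∑' r, c r / (s + q r)) (𝓝[>] 0) (𝓝 (∑' r, c r / q r)) := by
  refine tendsto_tsum_of_dominated_convergence hcq
    (fun r => tendsto_div_add_nhdsGT_zero (c r) (hq r).ne') ?_
  filter_upwards [self_mem_nhdsWithin] with s (hs : 0 < s) r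
  rw [Real.norm_of_nonneg (div_nonneg (hc r) (by linarith [hq r]))]
  exact div_le_div_of_nonneg_left (hc r) (hq r) (by linarith)

theorem tendsto_tsum_div_add_atTop (hc : ∀ r, 0 ≤ c r) (hq : ∀ r, 0 < q r)
    (hc_sum : Summable c) (hcq : ¬Summable fun r => c r / q r) :
    Tendsto (fun s => ∑' r, c r / (s + q r)) (𝓝[>] 0) atTop := by
  refine tendsto_atTop.2 fun M => ?_
  obtain ⟨N, hN⟩ := ((not_summable_iff_tendsto_nat_atTop_of_nonneg
    fun r => div_nonneg (hc r) (hq r).le).1 hcq).eventually_gt_atTop M |>.exists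
  have hpartial : Tendsto (fun s => ∑ r ∈ Finset.range N, c r / (s + q r)) (𝓝[>] 0)
      (𝓝 (∑ r ∈ Finset.range N, c r / q r)) :=
    tendsto_finsetSum _ fun r _ => tendsto_div_add_nhdsGT_zero (c r) (hq r).ne'
  filter_upwards [hpartial.eventually_const_lt hN, self_mem_nhdsWithin] with s hs (hs0 : 0 < s)
  have hterm : ∀ r, 0 ≤ c r / (s + q r) := fun r => div_nonneg (hc r) (by linarith [hq r])
  refine hs.le.trans (Summable.sum_le_tsum _ (fun r _ => hterm r) ?_)
  refine (hc_sum.div_const s).of_nonneg_of_le hterm fun r => ?_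
  exact div_le_div_of_nonneg_left (hc r) hs0 (by linarith [hq r])

end ExponentialMixtures

section Eigenvectors

variable {E : Type*} [NormedAddCommGroup E] [NormedSpace ℝ E]

theorem NormedSpace.exp_apply_of_apply_eq_smul [CompleteSpace E] {A : E →L[ℝ] E} {v : E}
    {μ : ℝ} (h : A v = μ • v) : NormedSpace.exp A v = Real.exp μ • v := by
  have hpow : ∀ n : ℕ, (A ^ n) v = μ ^ n • v := fun n => by
    induction n with
    | zero => simp
    | succ n ih => rw [pow_succ, mul_apply_eq_comp, h, map_smul, ih, smul_smul, ← pow_succ']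
  have hA := (NormedSpace.exp_series_hasSum_exp' (𝕂 := ℝ) A).mapL
    (ContinuousLinearMap.apply ℝ E v)
  have hμ := (NormedSpace.exp_series_hasSum_exp' (𝕂 := ℝ) μ).smul_const v
  simp only [ContinuousLinearMap.apply_apply, smul_apply, hpow, smul_smul, smul_eq_mul] at hA hμ
  rw [Real.exp_eq_exp_ℝ]
  exact hA.unique hμ

theorem Ring.inverse_apply_of_apply_eq {A : E →L[ℝ] E} (hA : IsUnit A) {v w : E}
    (h : A w = v) : Ring.inverse A v = w := by
  rw [← h, ← mul_apply_eq_comp, Ring.inverse_mul_cancel A hA, one_apply_eq_self]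

end Eigenvectors

namespace HX

variable {ν : ℕ}

@[ext] theorem ext {x y : HX ν} (h : ∀ n, x.1 n = y.1 n) : x = y := Subtype.ext (funext h)

def splitAt (s : ℕ) : HX ν ≃ (Fin s → Fin ν) × HX ν where
  toFun y := (fun i => y.1 i, ⟨fun n => y.1 (n + s), by
    obtain ⟨N, hN⟩ := y.2; exact ⟨N, fun n hn => hN (n + s) (by omega)⟩⟩)
  invFun w := ⟨fun n => if h : n < s then w.1 ⟨n, h⟩ else w.2.1 (n - s), by
    obtain ⟨N, hN⟩ := w.2.2
    refine ⟨N + s, fun n hn => ?_⟩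
    simp only [dif_neg (by omega : ¬n < s)]
    exact hN (n - s) (by omega)⟩
  left_inv y := by
    ext n
    by_cases h : n < s
    · simp [h]
    · simp [h, Nat.sub_add_cancel (not_lt.1 h)]
  right_inv w := by
    refine Prod.ext (funext fun i => ?_) (ext fun n => ?_) <;> simp

theorem mem_cube_iff_splitAt_snd {s : ℕ} {x y : HX ν} :
    y ∈ cube ν s x ↔ (splitAt s y).2 = (splitAt s x).2 := by
  refine ⟨fun h => ext fun n => h (n + s) (by omega), fun h n hn => ?_⟩
  have h' : y.1 (n - s + s) = x.1 (n - s + s) := congrArg (fun z : HX ν => z.1 (n - s)) h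
  rwa [Nat.sub_add_cancel hn] at h'

def cubeEquivDigits (s : ℕ) (x : HX ν) : cube ν s x ≃ (Fin s → Fin ν) where
  toFun y := (splitAt s y).1
  invFun g := ⟨(splitAt s).symm (g, (splitAt s x).2), by simp [mem_cube_iff_splitAt_snd]⟩
  left_inv y := by
    ext1
    show (splitAt s).symm ((splitAt s y).1, (splitAt s x).2) = y
    rw [← mem_cube_iff_splitAt_snd.1 y.2, Prod.mk.eta, Equiv.symm_apply_apply]
  right_inv g := by simp

instance (s : ℕ) (x : HX ν) : Finite (cube ν s x) := .of_equiv _ (cubeEquivDigits s x).symm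

theorem cubeSum_splitAt_symm (s : ℕ) (w : (Fin s → Fin ν) × HX ν) (ψ : Hl2 ν) :
    cubeSum ν s ((splitAt s).symm w) ψ = ∑ g, ψ ((splitAt s).symm (g, w.2)) := by
  rw [cubeSum, ← (cubeEquivDigits s _).symm.tsum_eq, tsum_fintype]
  simp [cubeEquivDigits]

theorem tsum_indicator_cube (r : ℕ) (x : HX ν) (c : ℝ) :
    ∑' y, (cube ν r x).indicator (fun _ => c) y = ν ^ r * c := by
  rw [← tsum_subtype, ← (cubeEquivDigits r x).symm.tsum_eq, tsum_fintype]
  simp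

theorem self_mem_cube (r : ℕ) (x : HX ν) : x ∈ cube ν r x := fun _ _ => rfl

theorem cube_subset_of_mem {r s : ℕ} (h : r ≤ s) {x z : HX ν} (hz : z ∈ cube ν s x) :
    cube ν r z ⊆ cube ν s x :=
  fun _ hy n hn => (hy n (h.trans hn)).trans (hz n hn)

theorem mem_cube_comm {r : ℕ} {x z : HX ν} (h : z ∈ cube ν r x) : x ∈ cube ν r z :=
  fun n hn => (h n hn).symm

theorem cube_zero (x : HX ν) : cube ν 0 x = {x} :=
  Set.eq_singleton_iff_unique_mem.2 ⟨self_mem_cube 0 x, fun _ hy => ext fun n => hy n n.zero_le⟩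

theorem summable_sq_cubeAvg_and_tsum_le (s : ℕ) (ψ : Hl2 ν) :
    Summable (fun y => (cubeSum ν s y ψ / ν ^ s) ^ 2) ∧
      ∑' y, (cubeSum ν s y ψ / ν ^ s) ^ 2 ≤ ‖ψ‖ ^ 2 := by
  have hψ : Summable fun w => ψ ((splitAt s).symm w) ^ 2 :=
    (splitAt s).symm.summable_iff.2 (memℓp_two_iff_summable_sq.1 ψ.2)
  have h := summable_sq_fiberAvg_and_tsum_le hψ
  simp only [Fintype.card_fun, Fintype.card_fin, Nat.cast_pow, ← cubeSum_splitAt_symm] at h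
  rw [← (splitAt s).symm.summable_iff, ← (splitAt s).symm.tsum_eq, lp.norm_sq_eq_tsum_sq,
    ← (splitAt s).symm.tsum_eq]
  exact h

def cubeAvg (s : ℕ) (ψ : Hl2 ν) : Hl2 ν :=
  ⟨fun y => cubeSum ν s y ψ / ν ^ s,
    memℓp_two_iff_summable_sq.2 (summable_sq_cubeAvg_and_tsum_le s ψ).1⟩

theorem cubeAvg_apply (s : ℕ) (ψ : Hl2 ν) (y : HX ν) :
    cubeAvg s ψ y = cubeSum ν s y ψ / ν ^ s := rfl

theorem norm_cubeAvg_le (s : ℕ) (ψ : Hl2 ν) : ‖cubeAvg s ψ‖ ≤ ‖ψ‖ := by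
  refine (pow_le_pow_iff_left₀ (norm_nonneg _) (norm_nonneg _) two_ne_zero).1 ?_
  rw [lp.norm_sq_eq_tsum_sq]
  exact (summable_sq_cubeAvg_and_tsum_le s ψ).2

theorem cubeAvg_sub (s : ℕ) (ψ φ : Hl2 ν) :
    cubeAvg s (ψ - φ) = cubeAvg s ψ - cubeAvg s φ := by
  ext y
  simp only [lp.coeFn_sub, Pi.sub_apply, cubeAvg_apply, cubeSum,
    Summable.tsum_sub Summable.of_finite Summable.of_finite, sub_div]

theorem norm_smul_cubeAvg_le {a : ℝ} (ha : 0 ≤ a) (s : ℕ) (ψ : Hl2 ν) :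
    ‖a • cubeAvg s ψ‖ ≤ a * ‖ψ‖ := by
  rw [norm_smul, Real.norm_of_nonneg ha]
  exact mul_le_mul_of_nonneg_left (norm_cubeAvg_le s ψ) ha

def unifCube (r : ℕ) (x : HX ν) : Hl2 ν :=
  ⟨(cube ν r x).indicator fun _ => ((ν : ℝ) ^ r)⁻¹,
    (memℓp_zero ((cube ν r x).toFinite.subset Set.support_indicator_subset)).of_exponent_ge
      bot_le⟩

theorem unifCube_apply (r : ℕ) (x y : HX ν) :
    unifCube r x y = (cube ν r x).indicator (fun _ => ((ν : ℝ) ^ r)⁻¹) y := rfl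

theorem unifCube_zero (x : HX ν) : unifCube 0 x = hdelta ν x := by
  ext y
  by_cases h : y = x <;> simp [unifCube_apply, hdelta, h, cube_zero]

theorem cubeAvg_unifCube (hν : ν ≠ 0) (t s : ℕ) (x : HX ν) :
    cubeAvg t (unifCube s x) = unifCube (max t s) x := by
  ext z
  have hsum : cubeSum ν t z (unifCube s x)
      = ∑' y, (cube ν t z ∩ cube ν s x).indicator (fun _ => ((ν : ℝ) ^ s)⁻¹) y := by
    rw [cubeSum, tsum_subtype (cube ν t z) fun y => unifCube s x y]
    simp only [unifCube_apply, Set.indicator_indicator]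
  rw [cubeAvg_apply, unifCube_apply, hsum]
  by_cases hz : z ∈ cube ν (max t s) x
  · rw [Set.indicator_of_mem hz]
    rcases le_total t s with hts | hst
    · rw [max_eq_right hts] at hz ⊢
      rw [Set.inter_eq_left.2 (cube_subset_of_mem hts hz), tsum_indicator_cube]
      field_simp
    · rw [max_eq_left hst] at hz ⊢
      rw [Set.inter_eq_right.2 (cube_subset_of_mem hst (mem_cube_comm hz)), tsum_indicator_cube]
      field_simp
  · have hdisj : cube ν t z ∩ cube ν s x = ∅ :=
      Set.eq_empty_of_forall_notMem fun y ⟨hyz, hyx⟩ => hz fun n hn =>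
        (hyz n (le_of_max_le_left hn)).symm.trans (hyx n (le_of_max_le_right hn))
    simp [Set.indicator_of_notMem hz, hdisj]

theorem norm_sq_unifCube (hν : ν ≠ 0) (r : ℕ) (x : HX ν) :
    ‖unifCube r x‖ ^ 2 = ((ν : ℝ)⁻¹) ^ r := by
  have hsq : ∀ y,
      unifCube r x y ^ 2 = (cube ν r x).indicator (fun _ => (((ν : ℝ) ^ r)⁻¹) ^ 2) y :=
    fun y => by by_cases hy : y ∈ cube ν r x <;> simp [unifCube_apply, hy]
  rw [lp.norm_sq_eq_tsum_sq, tsum_congr hsq, tsum_indicator_cube, inv_pow, sq, mul_inv,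
    ← mul_assoc, mul_inv_cancel₀ (by positivity), one_mul, inv_pow]

theorem norm_unifCube (hν : ν ≠ 0) (r : ℕ) (x : HX ν) :
    ‖unifCube r x‖ = √((ν : ℝ)⁻¹) ^ r := by
  refine (pow_left_inj₀ (norm_nonneg _) (by positivity) two_ne_zero).1 ?_
  rw [norm_sq_unifCube hν, ← pow_mul, mul_comm, pow_mul, Real.sq_sqrt (by positivity)]

def haar (r : ℕ) (x : HX ν) : Hl2 ν := unifCube r x - unifCube (r + 1) x

theorem cubeAvg_haar (hν : ν ≠ 0) (t r : ℕ) (x : HX ν) :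
    cubeAvg t (haar r x) = if t ≤ r then haar r x else 0 := by
  rw [haar, cubeAvg_sub, cubeAvg_unifCube hν, cubeAvg_unifCube hν]
  split_ifs with h
  · rw [max_eq_right h, max_eq_right (h.trans r.le_succ)]
  · rw [max_eq_left (not_le.1 h).le, max_eq_left (not_le.1 h), sub_self]

def haarWeight (ν r : ℕ) : ℝ := ((ν : ℝ) ^ r)⁻¹ - ((ν : ℝ) ^ (r + 1))⁻¹

theorem haar_apply_self (r : ℕ) (x : HX ν) : haar r x x = haarWeight ν r := by
  simp [haar, haarWeight, unifCube_apply, self_mem_cube]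

theorem apply_self_eq_tsum_of_hasSum_smul_haar {x : HX ν} {a : ℕ → ℝ} {f : Hl2 ν}
    (h : HasSum (fun r => a r • haar r x) f) : f x = ∑' r, haarWeight ν r * a r := by
  have hx : HasSum (fun r => a r * haar r x x) (f x) :=
    h.mapL (lp.evalCLM ℝ (fun _ : HX ν => ℝ) 2 x)
  simp only [haar_apply_self, mul_comm (a _)] at hx
  exact hx.tsum_eq.symm

theorem inner_hdelta (f : Hl2 ν) (x : HX ν) : inner ℝ f (hdelta ν x) = f x := by
  rw [hdelta, real_inner_comm, lp.inner_single_left]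
  simp

theorem norm_haar_le (hν : 1 < ν) (r : ℕ) (x : HX ν) :
    ‖haar r x‖ ≤ 2 * √((ν : ℝ)⁻¹) ^ r := by
  have hν0 : ν ≠ 0 := by omega
  have hρ : √((ν : ℝ)⁻¹) ^ (r + 1) ≤ √((ν : ℝ)⁻¹) ^ r := pow_le_pow_of_le_one
    (Real.sqrt_nonneg _) (sqrt_inv_lt_one_of_one_lt (Nat.one_lt_cast.2 hν)).le r.le_succ
  calc ‖haar r x‖ ≤ ‖unifCube r x‖ + ‖unifCube (r + 1) x‖ := norm_sub_le _ _
    _ ≤ 2 * √((ν : ℝ)⁻¹) ^ r := by rw [norm_unifCube hν0, norm_unifCube hν0]; linarith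

theorem summable_smul_haar (hν : 1 < ν) (x : HX ν) {a : ℕ → ℝ} {C : ℝ}
    (ha : ∀ r, ‖a r‖ ≤ C) : Summable fun r => a r • haar r x := by
  have hρ := sqrt_inv_lt_one_of_one_lt (Nat.one_lt_cast.2 hν)
  refine Summable.of_norm_bounded
    ((summable_geometric_of_lt_one (Real.sqrt_nonneg _) hρ).mul_left (C * 2)) fun r => ?_
  rw [norm_smul, mul_assoc]
  exact mul_le_mul (ha r) (norm_haar_le hν r x) (norm_nonneg _) ((norm_nonneg _).trans (ha 0))

theorem hasSum_haar (hν : 1 < ν) (x : HX ν) : HasSum (fun r => haar r x) (hdelta ν x) := by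
  have hsum : Summable fun r => haar r x := by
    simpa using summable_smul_haar hν x (a := fun _ => 1) (C := 1) (by simp)
  have hlim : Tendsto (fun r => unifCube r x) atTop (𝓝 0) := by
    refine squeeze_zero_norm (fun r => (norm_unifCube (by omega) r x).le) ?_
    exact tendsto_pow_atTop_nhds_zero_of_lt_one (Real.sqrt_nonneg _)
      (sqrt_inv_lt_one_of_one_lt (Nat.one_lt_cast.2 hν))
  rw [hsum.hasSum_iff_tendsto_nat]
  simp only [haar, Finset.sum_range_sub', unifCube_zero]
  simpa using tendsto_const_nhds.sub hlim

theorem haarWeight_eq (r : ℕ) :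
    haarWeight ν r = (1 - (ν : ℝ)⁻¹) * ((ν : ℝ)⁻¹) ^ r := by
  rw [haarWeight, pow_succ, mul_inv, inv_pow]
  ring

theorem haarWeight_nonneg (hν : ν ≠ 0) (r : ℕ) : 0 ≤ haarWeight ν r := by
  rw [haarWeight_eq]
  exact mul_nonneg (sub_nonneg.2 (inv_le_one_of_one_le₀ (Nat.one_le_cast.2 (by omega))))
    (by positivity)

theorem summable_haarWeight (hν : 1 < ν) : Summable (haarWeight ν) := by
  refine ((summable_geometric_of_lt_one (by positivity)
    (inv_lt_one_of_one_lt₀ (Nat.one_lt_cast.2 hν))).mul_left (1 - (ν : ℝ)⁻¹)).congr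
    fun r => (haarWeight_eq r).symm

theorem haarWeight_div_pow (p : ℝ) (r : ℕ) :
    haarWeight ν r / p ^ r = (1 - (ν : ℝ)⁻¹) * ((p * ν)⁻¹) ^ r := by
  rw [haarWeight_eq, mul_inv, mul_pow, inv_pow p, div_eq_mul_inv]
  ring

theorem summable_haarWeight_div_pow_iff (hν : 1 < ν) {p : ℝ} (hp0 : 0 < p) :
    Summable (fun r => haarWeight ν r / p ^ r) ↔ 1 < p * ν := by
  have hν' : (1 : ℝ) < ν := Nat.one_lt_cast.2 hν
  simp only [haarWeight_div_pow]
  rw [summable_mul_left_iff (sub_ne_zero.2 (inv_lt_one_of_one_lt₀ hν').ne'),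
    summable_geometric_iff_norm_lt_one, norm_inv, Real.norm_of_nonneg (by positivity),
    inv_lt_one₀ (by positivity)]

theorem tsum_haarWeight_div_pow {p : ℝ} (h : 1 < p * ν) :
    ∑' r, haarWeight ν r / p ^ r = p * (ν - 1) / (p * ν - 1) := by
  simp only [haarWeight_div_pow]
  rw [tsum_mul_left,
    tsum_geometric_of_lt_one (inv_nonneg.2 (by linarith)) (inv_lt_one_of_one_lt₀ h)]
  have hpν : p * ν ≠ 0 := by linarith
  have := left_ne_zero_of_mul hpν
  have := right_ne_zero_of_mul hpν
  have : p * ν - 1 ≠ 0 := by linarith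
  field_simp

end HX

namespace IsHierLap

open HX

variable {ν : ℕ} {p : ℝ} {Δ : Hl2 ν →L[ℝ] Hl2 ν}

theorem apply_eq (hΔ : IsHierLap ν p Δ) (ψ : Hl2 ν) (y : HX ν) :
    Δ ψ y = ∑' r, (1 - p) * p ^ r * (cubeAvg (r + 1) ψ y - ψ y) := by
  simp only [hΔ ψ y, cubeAvg_apply, inv_mul_eq_div]

theorem apply_haar (hΔ : IsHierLap ν p Δ) (hν : ν ≠ 0) (hp0 : 0 ≤ p) (hp1 : p < 1)
    (r : ℕ) (x : HX ν) : Δ (haar r x) = (-p ^ r) • haar r x := by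
  ext z
  have hterm : ∀ m, (1 - p) * p ^ m * (cubeAvg (m + 1) (haar r x) z - haar r x z)
      = -haar r x z * if m < r then 0 else (1 - p) * p ^ m := fun m => by
    rw [cubeAvg_haar hν]
    by_cases hm : m < r
    · simp [hm]
    · simp [hm, mul_comm]
  rw [hΔ.apply_eq, tsum_congr hterm, tsum_mul_left, (hasSum_ite_lt_geometric hp0 hp1 r).tsum_eq,
    lp.coeFn_smul, Pi.smul_apply, smul_eq_mul]
  ring

theorem hasSum_one_add_apply (hΔ : IsHierLap ν p Δ) (hp0 : 0 ≤ p) (hp1 : p < 1) (ψ : Hl2 ν) :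
    HasSum (fun m => ((1 - p) * p ^ m) • cubeAvg (m + 1) ψ) (ψ + Δ ψ) := by
  have hgeom := hasSum_one_sub_mul_geometric hp0 hp1
  have hsum : Summable fun m => ((1 - p) * p ^ m) • cubeAvg (m + 1) ψ :=
    Summable.of_norm_bounded (hgeom.summable.mul_right ‖ψ‖) fun m =>
      norm_smul_cubeAvg_le (mul_nonneg (sub_nonneg.2 hp1.le) (pow_nonneg hp0 m)) _ ψ
  convert hsum.hasSum
  ext y
  have hy : HasSum (fun m => (1 - p) * p ^ m * cubeAvg (m + 1) ψ y)
      ((∑' m, ((1 - p) * p ^ m) • cubeAvg (m + 1) ψ : Hl2 ν) y) :=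
    hsum.hasSum.mapL (lp.evalCLM ℝ (fun _ : HX ν => ℝ) 2 y)
  have hΔy := hy.sub (hgeom.mul_right (ψ y))
  simp only [← mul_sub, one_mul] at hΔy
  rw [lp.coeFn_add, Pi.add_apply, hΔ.apply_eq, hΔy.tsum_eq]
  ring

theorem norm_one_add_le (hΔ : IsHierLap ν p Δ) (hp0 : 0 ≤ p) (hp1 : p < 1) :
    ‖1 + Δ‖ ≤ 1 := by
  refine ContinuousLinearMap.opNorm_le_bound _ zero_le_one fun ψ => ?_
  rw [add_apply, one_apply_eq_self]
  simpa using (hΔ.hasSum_one_add_apply hp0 hp1 ψ).norm_le_of_bounded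
    ((hasSum_one_sub_mul_geometric hp0 hp1).mul_right ‖ψ‖) fun m =>
      norm_smul_cubeAvg_le (mul_nonneg (sub_nonneg.2 hp1.le) (pow_nonneg hp0 m)) _ ψ

theorem isUnit_smul_one_sub (hΔ : IsHierLap ν p Δ) (hp0 : 0 ≤ p) (hp1 : p < 1) {s : ℝ}
    (hs : 0 < s) : IsUnit (s • (1 : Hl2 ν →L[ℝ] Hl2 ν) - Δ) := by
  have hres : 1 + s ∈ resolventSet ℝ (1 + Δ) := by
    refine spectrum.mem_resolventSet_of_norm_lt_mul ?_
    calc ‖1 + Δ‖ * ‖(1 : Hl2 ν →L[ℝ] Hl2 ν)‖ ≤ 1 * 1 :=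
          mul_le_mul (hΔ.norm_one_add_le hp0 hp1) ContinuousLinearMap.norm_id_le (norm_nonneg _)
            zero_le_one
      _ < ‖1 + s‖ := by rw [Real.norm_of_nonneg (by positivity)]; linarith
  rw [spectrum.mem_resolventSet_iff, Algebra.algebraMap_eq_smul_one, add_smul, one_smul] at hres
  convert hres using 1
  abel

theorem heatK_self_eq (hΔ : IsHierLap ν p Δ) (hν : 1 < ν) (hp0 : 0 ≤ p) (hp1 : p < 1)
    (t : ℝ) (x : HX ν) :
    heatK ν Δ t x x = ∑' r, haarWeight ν r * Real.exp (-p ^ r * t) := by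
  have hexp : ∀ r, NormedSpace.exp (t • Δ) (haar r x) = Real.exp (-p ^ r * t) • haar r x :=
    fun r => NormedSpace.exp_apply_of_apply_eq_smul <| by
      rw [smul_apply, hΔ.apply_haar (by omega) hp0 hp1, smul_smul, mul_comm]
  have h := (hasSum_haar hν x).mapL (NormedSpace.exp (t • Δ))
  simp only [hexp] at h
  rw [heatK, inner_hdelta, apply_self_eq_tsum_of_hasSum_smul_haar h]

theorem resolvK_self_eq (hΔ : IsHierLap ν p Δ) (hν : 1 < ν) (hp0 : 0 ≤ p) (hp1 : p < 1)
    {s : ℝ} (hs : 0 < s) (x : HX ν) :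
    resolvK ν Δ s x x = ∑' r, haarWeight ν r / (s + p ^ r) := by
  have hpos : ∀ r, 0 < s + p ^ r := fun r => by positivity
  have hsum := summable_smul_haar hν x (a := fun r => (s + p ^ r)⁻¹) (C := s⁻¹) fun r => by
    rw [norm_inv, Real.norm_of_nonneg (hpos r).le]
    exact inv_anti₀ hs (by linarith [pow_nonneg hp0 r])
  have happly :
      (s • (1 : Hl2 ν →L[ℝ] Hl2 ν) - Δ) (∑' r, (s + p ^ r)⁻¹ • haar r x) = hdelta ν x := by
    rw [ContinuousLinearMap.map_tsum _ hsum, ← (hasSum_haar hν x).tsum_eq]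
    refine tsum_congr fun r => ?_
    rw [map_smul, sub_apply, smul_apply, one_apply_eq_self, hΔ.apply_haar (by omega) hp0 hp1,
      ← sub_smul, sub_neg_eq_add, smul_smul, inv_mul_cancel₀ (hpos r).ne', one_smul]
  rw [resolvK, Ring.inverse_apply_of_apply_eq (hΔ.isUnit_smul_one_sub hp0 hp1 hs) happly,
    inner_hdelta, apply_self_eq_tsum_of_hasSum_smul_haar hsum.hasSum]
  simp only [div_eq_mul_inv]

end IsHierLap

theorem one_lt_mul_iff_two_lt_sh {ν : ℕ} (hν : 1 < ν) {p : ℝ} (hp0 : 0 < p) (hp1 : p < 1) :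
    1 < p * ν ↔ 2 < sh ν p := by
  have hlog : 0 < Real.log (1 / p) := Real.log_pos (one_lt_one_div hp0 hp1)
  rw [sh, lt_div_iff₀ hlog, mul_lt_mul_iff_right₀ two_pos,
    Real.log_lt_log_iff (by positivity) (by positivity), div_lt_iff₀ hp0, mul_comm]

theorem stmt8 (ν : ℕ) (hν : 2 ≤ ν) (p : ℝ) (hp0 : 0 < p) (hp1 : p < 1)
    (Δ : Hl2 ν →L[ℝ] Hl2 ν) (hΔ : IsHierLap ν p Δ) :
    (1 < p * ν ↔ 2 < sh ν p) ∧
    (1 < p * ν →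
      ∀ x : HX ν,
        IntegrableOn (fun t => heatK ν Δ t x x) (Set.Ioi (0 : ℝ)) ∧
        ∫ t in Set.Ioi (0 : ℝ), heatK ν Δ t x x = p * (ν - 1) / (p * ν - 1) ∧
        Tendsto (fun lam => resolvK ν Δ lam x x) (nhdsWithin 0 (Set.Ioi 0))
          (nhds (p * (ν - 1) / (p * ν - 1)))) ∧
    (p * ν ≤ 1 →
      ∀ x : HX ν,
        Tendsto (fun lam => resolvK ν Δ lam x x) (nhdsWithin 0 (Set.Ioi 0)) atTop) := by
  have hν1 : 1 < ν := hν
  have hw := HX.haarWeight_nonneg (ν := ν) (by omega)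
  have hq : ∀ r, 0 < p ^ r := fun r => pow_pos hp0 r
  have hresolv : ∀ x, (fun s => ∑' r, HX.haarWeight ν r / (s + p ^ r)) =ᶠ[𝓝[>] 0]
      fun s => resolvK ν Δ s x x := fun x => by
    filter_upwards [self_mem_nhdsWithin] with s hs
    exact (hΔ.resolvK_self_eq hν1 hp0.le hp1 hs x).symm
  refine ⟨one_lt_mul_iff_two_lt_sh hν1 hp0 hp1, fun h x => ?_, fun h x => ?_⟩
  · have hsum := (HX.summable_haarWeight_div_pow_iff hν1 hp0).2 h
    have hheat :=
      integrableOn_tsum_mul_exp_and_integral_eq hw hq (HX.summable_haarWeight hν1) hsum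
    simp only [← funext fun t => hΔ.heatK_self_eq hν1 hp0.le hp1 t x,
      HX.tsum_haarWeight_div_pow h] at hheat
    exact ⟨hheat.1, hheat.2, HX.tsum_haarWeight_div_pow h ▸
      (tendsto_tsum_div_add_nhdsGT hw hq hsum).congr' (hresolv x)⟩
  · have hsum : ¬Summable fun r => HX.haarWeight ν r / p ^ r :=
      fun hs => h.not_gt ((HX.summable_haarWeight_div_pow_iff hν1 hp0).1 hs)
    exact (tendsto_tsum_div_add_atTop hw hq (HX.summable_haarWeight hν1) hsum).congr' (hresolv x)
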